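/- Let v_1, v_2 ∈ C^n be linearly independent and k > 1. The order-k symmetric tensor ∑_{j=1}^{k} v_2 ⊗ ... ⊗ v_1 ⊗ ... ⊗ v_2 (the symmetrized product with v_1 in position j and v_2 in all other positions, summed over j) has symmetric rank exactly k. -/

import Mathlib

open scoped BigOperators

abbrev Tensor (k n : ℕ) := (Fin k → Fin n) → ℂ

/-- Action of a permutation on tensor factors (array form). -/
def permAct {k n : ℕ} (σ : Equiv.Perm (Fin k)) (A : Tensor k n) : Tensor k n :=
  fun j => A (j ∘ σ)

/-- The symmetrization operator `S = (1/k!) ∑_{σ ∈ S_k} σ`. -/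
noncomputable def symmetrize {k n : ℕ} (A : Tensor k n) : Tensor k n :=
  ((k.factorial : ℂ)⁻¹) • ∑ σ : Equiv.Perm (Fin k), permAct σ A

/-- `y^{⊗ k}`, the k-th tensor (outer) power of a vector. -/
def tpow {k n : ℕ} (y : Fin n → ℂ) : Tensor k n := fun j => ∏ l, y (j l)

/-- Outer product `v 0 ⊗ v 1 ⊗ ... ⊗ v (k-1)`. -/
def outer {k n : ℕ} (v : Fin k → Fin n → ℂ) : Tensor k n := fun j => ∏ l, v l (j l)

/-- Symmetric rank. -/
noncomputable def symRank {k n : ℕ} (A : Tensor k n) : ℕ :=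
  sInf {s | ∃ y : Fin s → Fin n → ℂ, A = ∑ i, tpow (y i)}

/-- Tensor rank. -/
noncomputable def tRank {k n : ℕ} (A : Tensor k n) : ℕ :=
  sInf {r | ∃ v : Fin r → Fin k → Fin n → ℂ, A = ∑ i, outer (v i)}

/-!
Upper bound: expanding `(ωⁱ • v₁ + v₂)^{⊗k}` over the sets `S` of positions that carry `v₁` and
averaging with weights `ω⁻ⁱ / k` over the `k`-th roots of unity `ωⁱ` cancels every `S` except the
singletons, and the weights are absorbed into the vectors by taking `k`-th roots.

Lower bound: with `u₁, u₂` dual to `v₁, v₂`, evaluating the associated forms at `t • u₁ + u₂` turns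
a decomposition into `s` powers into `∑_{i<s} (aᵢ t + bᵢ)^k = k t`. The operator
`(a X + b) d/dX - k a` kills `(a X + b)^k`, lowers every other `k`-th power of a linear polynomial
to a multiple of a `(k-1)`-th power, and multiplies the linear coefficient of the right-hand side
by `(1 - k) a`; a power with `a = 0` is a constant and moves to the right. By induction, fewer
than `k` such powers never add up to a nonconstant linear polynomial.
-/

open Finset Matrix

def symMonomial (k : ℕ) {n : ℕ} (v₁ v₂ : Fin n → ℂ) : Tensor k n :=
  ∑ j : Fin k, outer (fun l => if l = j then v₁ else v₂)

open Polynomial in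
theorem eq_zero_of_sum_C_mul_pow_eq {K ι : Type*} [Field K] [CharZero K] [DecidableEq ι]
    (s : Finset ι) {k : ℕ} (hs : #s < k) (c a b : ι → K) {α β : K}
    (h : ∑ i ∈ s, C (c i) * (C (a i) * X + C (b i)) ^ k = C α * X + C β) : α = 0 := by
  induction s using Finset.induction_on generalizing k c α β with
  | empty =>
    simpa using (congrArg (coeff · 1) h).symm
  | insert j s hj ih =>
    rw [card_insert_of_notMem hj] at hs
    rw [sum_insert hj] at h
    by_cases ha : a j = 0
    · refine ih (k := k) (by omega) c (β := β - c j * b j ^ k) ?_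
      rw [ha] at h
      simp only [C_0, zero_mul, zero_add, ← C_pow, ← C_mul] at h
      rw [C_sub]
      linear_combination h
    obtain ⟨m, rfl⟩ : ∃ m, k = m + 1 := ⟨k - 1, by omega⟩
    let D : K[X] →ₗ[K] K[X] :=
      (LinearMap.mulLeft K (C (a j) * X + C (b j))) ∘ₗ derivative - ((m + 1) * a j) • LinearMap.id
    have hD (i : ι) : D (C (c i) * (C (a i) * X + C (b i)) ^ (m + 1)) =
        C (c i * (m + 1) * (a i * b j - a j * b i)) * (C (a i) * X + C (b i)) ^ m := by
      simp only [D, LinearMap.sub_apply, LinearMap.comp_apply, LinearMap.mulLeft_apply,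
        LinearMap.smul_apply, LinearMap.id_apply, derivative_mul, derivative_C, derivative_pow,
        derivative_add, derivative_X, Nat.add_sub_cancel, smul_eq_C_mul]
      simp only [C_mul, C_sub, C_add, C_1, map_natCast, Nat.cast_add, Nat.cast_one]
      ring
    have hDlin : D (C α * X + C β) = C (-(m * a j * α)) * X + C (α * b j - (m + 1) * a j * β) := by
      simp only [D, LinearMap.sub_apply, LinearMap.comp_apply, LinearMap.mulLeft_apply,
        LinearMap.smul_apply, LinearMap.id_apply, derivative_mul, derivative_C, derivative_X,
        derivative_add, smul_eq_C_mul]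
      simp only [C_mul, C_sub, C_add, C_1, C_neg, map_natCast]
      ring
    have h' := congrArg D h
    rw [map_add, map_sum, hDlin, hD] at h'
    simp only [hD, sub_self, mul_zero, C_0, zero_mul, zero_add] at h'
    have hm : (m : K) ≠ 0 := by exact_mod_cast (show m ≠ 0 by omega)
    simpa [hm, ha] using ih (by omega) _ h'

theorem Matrix.mulVec_surjective_of_linearIndependent_row {m n K : Type*} [Field K] [Fintype m]
    [Fintype n] {M : Matrix m n K} (h : LinearIndependent K M.row) :
    Function.Surjective M.mulVec := by
  have hrange : LinearMap.range M.mulVecLin = ⊤ := by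
    apply Submodule.eq_top_of_finrank_eq
    rw [Module.finrank_fintype_fun_eq_card, ← h.rank_matrix]
    rfl
  exact LinearMap.range_eq_top.mp hrange

theorem IsPrimitiveRoot.sum_pow_pow_eq_ite {K : Type*} [Field K] {ζ : K} {k : ℕ}
    (hζ : IsPrimitiveRoot ζ k) (m : ℕ) :
    ∑ i ∈ range k, (ζ ^ i) ^ m = if k ∣ m then (k : K) else 0 := by
  simp_rw [← pow_mul, mul_comm _ m, pow_mul]
  split_ifs with h
  · simp [(hζ.pow_eq_one_iff_dvd m).mpr h]
  · rw [geom_sum_eq (mt (hζ.pow_eq_one_iff_dvd m).mp h), ← pow_mul, mul_comm, pow_mul,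
      hζ.pow_eq_one, one_pow, sub_self, zero_div]

theorem Nat.dvd_add_pred_iff {k m : ℕ} (hk : 1 < k) (hm : m ≤ k) : k ∣ m + (k - 1) ↔ m = 1 := by
  constructor
  · rintro ⟨q, hq⟩
    rcases q with _ | _ | q
    · omega
    · omega
    · have : 2 * k ≤ k * (q + 1 + 1) := by nlinarith
      omega
  · rintro rfl
    exact ⟨1, by omega⟩

theorem Finset.sum_ite_card_eq_one {α M : Type*} [Fintype α] [DecidableEq α] [AddCommMonoid M]
    (F : Finset α → M) : ∑ S, (if #S = 1 then F S else 0) = ∑ a, F {a} := by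
  rw [← sum_filter, ← powerset_univ, ← powersetCard_eq_filter, powersetCard_one, sum_map]
  rfl

section Tensor

variable {k n : ℕ}

def formEval (w : Fin n → ℂ) : Tensor k n →ₗ[ℂ] ℂ where
  toFun A := ∑ j, A j * ∏ l, w (j l)
  map_add' A B := by simp only [Pi.add_apply, add_mul, sum_add_distrib]
  map_smul' c A := by simp only [Pi.smul_apply, smul_eq_mul, mul_sum, mul_assoc, RingHom.id_apply]

theorem formEval_outer (w : Fin n → ℂ) (v : Fin k → Fin n → ℂ) :
    formEval w (outer v) = ∏ l, v l ⬝ᵥ w := by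
  simp only [formEval, LinearMap.coe_mk, AddHom.coe_mk, outer, dotProduct, ← prod_mul_distrib]
  rw [prod_univ_sum, Fintype.piFinset_univ]

theorem formEval_tpow (w y : Fin n → ℂ) : formEval w (tpow y : Tensor k n) = (y ⬝ᵥ w) ^ k := by
  rw [show (tpow y : Tensor k n) = outer fun _ => y from rfl, formEval_outer, prod_const,
    card_univ, Fintype.card_fin]

theorem formEval_symMonomial (w v₁ v₂ : Fin n → ℂ) :
    formEval w (symMonomial k v₁ v₂) = k * (v₁ ⬝ᵥ w) * (v₂ ⬝ᵥ w) ^ (k - 1) := by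
  simp only [symMonomial, map_sum, formEval_outer, apply_ite (· ⬝ᵥ w)]
  simp [prod_ite, filter_eq', filter_ne', mul_assoc]

theorem tpow_smul (c : ℂ) (y : Fin n → ℂ) : (tpow (c • y) : Tensor k n) = c ^ k • tpow y := by
  ext j
  simp [tpow, prod_mul_distrib]

theorem sum_smul_tpow_eq_sum_tpow (hk : k ≠ 0) {ι : Type*} [Fintype ι] (c : ι → ℂ)
    (y : ι → Fin n → ℂ) :
    ∑ i, c i • (tpow (y i) : Tensor k n) = ∑ i, tpow (c i ^ (k⁻¹ : ℂ) • y i) := by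
  simp only [tpow_smul, Complex.cpow_nat_inv_pow _ hk]

theorem tpow_smul_add (z : ℂ) (x y : Fin n → ℂ) :
    (tpow (z • x + y) : Tensor k n) =
      ∑ S : Finset (Fin k), z ^ #S • outer fun l => if l ∈ S then x else y := by
  ext j
  simp only [tpow, outer, Finset.sum_apply, Pi.smul_apply, Pi.add_apply, smul_eq_mul,
    Fintype.prod_add, prod_mul_distrib, prod_const, ite_apply, prod_ite, filter_mem_eq_inter,
    univ_inter, filter_notMem_eq_sdiff, compl_eq_univ_sdiff, mul_assoc]

/-- The coefficient of `S` on the right is the average of `ω ^ (i * (#S - 1))`, since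
`ω ^ (k - 1) = ω⁻¹`; it vanishes unless `#S = 1`. -/
theorem symMonomial_eq_sum_smul_tpow (hk : 1 < k) {ω : ℂ} (hω : IsPrimitiveRoot ω k)
    (v₁ v₂ : Fin n → ℂ) :
    symMonomial k v₁ v₂ =
      ∑ i : Fin k, ((ω ^ (i : ℕ)) ^ (k - 1) / k) • tpow (ω ^ (i : ℕ) • v₁ + v₂) := by
  have hk0 : (k : ℂ) ≠ 0 := by exact_mod_cast (show k ≠ 0 by omega)
  have hcoef (S : Finset (Fin k)) :
      ∑ i : Fin k, (ω ^ (i : ℕ)) ^ (k - 1) / k * (ω ^ (i : ℕ)) ^ #S =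
        if #S = 1 then 1 else 0 := by
    rw [Fin.sum_univ_eq_sum_range (fun i => (ω ^ i) ^ (k - 1) / k * (ω ^ i) ^ #S)]
    simp_rw [div_mul_eq_mul_div, ← pow_add, ← sum_div, add_comm (k - 1), hω.sum_pow_pow_eq_ite,
      Nat.dvd_add_pred_iff hk ((card_le_univ S).trans_eq (Fintype.card_fin k))]
    split_ifs <;> simp [hk0]
  simp_rw [tpow_smul_add, smul_sum, smul_smul]
  rw [sum_comm]
  simp_rw [← sum_smul, hcoef, ite_smul, one_smul, zero_smul]
  rw [sum_ite_card_eq_one]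
  simp [symMonomial]

open Polynomial in
theorem le_of_symMonomial_eq_sum_tpow {s : ℕ} {v₁ v₂ : Fin n → ℂ}
    (hv : LinearIndependent ℂ ![v₁, v₂]) (y : Fin s → Fin n → ℂ)
    (h : symMonomial k v₁ v₂ = ∑ i, tpow (y i)) : k ≤ s := by
  by_contra! hs
  obtain ⟨B, hB⟩ := Matrix.mulVec_surjective_iff_exists_right_inverse.mp
    (Matrix.mulVec_surjective_of_linearIndependent_row (M := Matrix.of ![v₁, v₂]) hv)
  have hdual (x : Fin 2 → ℂ) : v₁ ⬝ᵥ B *ᵥ x = x 0 ∧ v₂ ⬝ᵥ B *ᵥ x = x 1 :=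
    have hx : Matrix.of ![v₁, v₂] *ᵥ B *ᵥ x = x := by rw [mulVec_mulVec, hB, one_mulVec]
    ⟨congrFun hx 0, congrFun hx 1⟩
  have heval (t : ℂ) : ∑ i, ((y i ᵥ* B) 0 * t + (y i ᵥ* B) 1) ^ k = k * t := by
    have := congrArg (formEval (B *ᵥ ![t, 1])) h
    rw [formEval_symMonomial, (hdual _).1, (hdual _).2, map_sum] at this
    simp only [formEval_tpow, dotProduct_mulVec] at this
    simpa [dotProduct, Fin.sum_univ_two] using this.symm
  have hpoly : ∑ i ∈ univ, C 1 * (C ((y i ᵥ* B) 0) * X + C ((y i ᵥ* B) 1)) ^ k =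
      C (k : ℂ) * X + C 0 :=
    Polynomial.funext fun t => by simpa [eval_finsetSum] using heval t
  have hk : (k : ℂ) = 0 :=
    eq_zero_of_sum_C_mul_pow_eq univ (by simpa using hs) (fun _ => 1) _ _ hpoly
  exact (Nat.cast_ne_zero.mpr (by omega)) hk

end Tensor

/-- For linearly independent v₁, v₂ and k > 1, the symmetrized tensor
∑_j v₂ ⊗ ... ⊗ v₁(position j) ⊗ ... ⊗ v₂ has symmetric rank exactly k. -/
theorem symRank_symmetrized_monomial (k n : ℕ) (hk : 1 < k)
    (v₁ v₂ : Fin n → ℂ) (hv : LinearIndependent ℂ ![v₁, v₂]) :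
    symRank (∑ j : Fin k, outer (fun l => if l = j then v₁ else v₂) : Tensor k n)
      = k := by
  obtain ⟨ω, hω⟩ : ∃ ω : ℂ, IsPrimitiveRoot ω k := ⟨_, Complex.isPrimitiveRoot_exp k (by omega)⟩
  have hdecomp : k ∈ {s | ∃ y : Fin s → Fin n → ℂ, symMonomial k v₁ v₂ = ∑ i, tpow (y i)} :=
    ⟨_, (symMonomial_eq_sum_smul_tpow hk hω v₁ v₂).trans (sum_smul_tpow_eq_sum_tpow (by omega) _ _)⟩
  exact le_antisymm (Nat.sInf_le hdecomp)
    (le_csInf ⟨k, hdecomp⟩ fun s ⟨y, hy⟩ => le_of_symMonomial_eq_sum_tpow hv y hy)
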